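/- Boundedness of rotated-Q1 IFE basis functions, uniformly in the interface location (reference-element form, h = 1): there exists a constant C > 0 depending only on β⁻ and β⁺ (and not on d, e) such that for all d, e ∈ (0,1), for either type of degrees of freedom (edge-mean or midpoint), and for each j ∈ {1,2,3,4}, the IFE basis function φⱼ (the unique piecewise rotated-Q1 function satisfying the jump conditions (J1)–(J3) whose degree-of-freedom vector is the j-th standard basis vector of ℝ⁴) satisfies |∂^α pˢ(x,y)| ≤ C for all (x,y) ∈ T, both s = ±, and all multi-indices α with |α| ≤ 2, where p⁻ and p⁺ are the two polynomial pieces of φⱼ. -/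

import Mathlib

open MeasureTheory Set

noncomputable section

/-- The rotated-Q1 polynomial `c₁ + c₂ x + c₃ y + c₄ (x² − y²)` with coefficient
vector `c = (c 0, c 1, c 2, c 3)`. -/
def rq1 (c : Fin 4 → ℝ) (x y : ℝ) : ℝ :=
  c 0 + c 1 * x + c 2 * y + c 3 * (x ^ 2 - y ^ 2)

/-- The piecewise rotated-Q1 function on the reference Type II interface element:
`p⁻` where `x ≤ d + (e − d) y`, `p⁺` elsewhere. -/
def phiFn (d e : ℝ) (cm cp : Fin 4 → ℝ) (x y : ℝ) : ℝ :=
  if x ≤ d + (e - d) * y then rq1 cm x y else rq1 cp x y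

/-- Jump condition (J1): continuity at the interface points `D = (d,0)` and `E = (e,1)`. -/
def J1 (d e : ℝ) (cm cp : Fin 4 → ℝ) : Prop :=
  rq1 cm d 0 = rq1 cp d 0 ∧ rq1 cm e 1 = rq1 cp e 1

/-- Jump condition (J2): matching of the `x² − y²` coefficients. -/
def J2 (cm cp : Fin 4 → ℝ) : Prop := cm 3 = cp 3

/-- The flux defect `∫₀¹ (β⁺∇p⁺ − β⁻∇p⁻)((1−t)d + te, t) · (1, d − e) dt`. -/
def fluxDefect (βm βp d e : ℝ) (cm cp : Fin 4 → ℝ) : ℝ :=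
  ∫ t in (0:ℝ)..1,
    ((βp * (cp 1 + 2 * cp 3 * ((1 - t) * d + t * e))
        - βm * (cm 1 + 2 * cm 3 * ((1 - t) * d + t * e))) * 1
      + (βp * (cp 2 - 2 * cp 3 * t) - βm * (cm 2 - 2 * cm 3 * t)) * (d - e))

/-- Jump condition (J3): the integral over `DE` of the jump of the normal flux vanishes. -/
def J3 (βm βp d e : ℝ) (cm cp : Fin 4 → ℝ) : Prop :=
  fluxDefect βm βp d e cm cp = 0

/-- The four edge-mean (integral-value) degrees of freedom of `φ`:
bottom, right, top, left edges of `T = [0,1]²`. -/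
def dofI (d e : ℝ) (cm cp : Fin 4 → ℝ) : Fin 4 → ℝ :=
  ![(∫ x in (0:ℝ)..d, rq1 cm x 0) + ∫ x in d..(1:ℝ), rq1 cp x 0,
    ∫ y in (0:ℝ)..1, rq1 cp 1 y,
    (∫ x in (0:ℝ)..e, rq1 cm x 1) + ∫ x in e..(1:ℝ), rq1 cp x 1,
    ∫ y in (0:ℝ)..1, rq1 cm 0 y]

/-- The four midpoint-value degrees of freedom of `φ`:
values at the midpoints of the bottom, right, top, left edges of `T = [0,1]²`. -/
def dofP (d e : ℝ) (cm cp : Fin 4 → ℝ) : Fin 4 → ℝ :=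
  ![phiFn d e cm cp (1/2) 0, phiFn d e cm cp 1 (1/2),
    phiFn d e cm cp (1/2) 1, phiFn d e cm cp 0 (1/2)]

/-- The partial derivative `∂ₓᵃ∂ᵧᵇ` of the rotated-Q1 polynomial with coefficients `c`. -/
def rq1D (c : Fin 4 → ℝ) : ℕ → ℕ → ℝ → ℝ → ℝ
  | 0, 0, x, y => rq1 c x y
  | 1, 0, x, _ => c 1 + 2 * c 3 * x
  | 0, 1, _, y => c 2 - 2 * c 3 * y
  | 2, 0, _, _ => 2 * c 3
  | 1, 1, _, _ => 0
  | 0, 2, _, _ => -(2 * c 3)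
  | _, _, _, _ => 0

/-!
Conditions (J1) and (J2) say exactly that `p⁻ = p⁺ + u ℓ`, where `u` is the jump of `∂ₓp` and
`ℓ(x, y) = x - d - (e - d) y` vanishes on `DE`; hence `φ = p⁺ + u min(ℓ, 0)`. Both kinds of
degrees of freedom of `φ` are therefore the usual degrees of freedom of the single rotated-Q1
polynomial `p⁺`, shifted by `u` times a vector `s` that is bounded uniformly in `d, e`.
Eliminating `p⁺` from (J3) by means of the four degree-of-freedom equations leaves
`(β⁻ M + (β⁺ - β⁻) W) u = (β⁺ - β⁻) G` with `0 ≤ W ≤ M`: the coefficient of `u` lies between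
`β⁻ M` and `β⁺ M`, so `u` is bounded by the data, and then so are all coefficients.
-/

theorem integral_quadratic (P Q R a b : ℝ) :
    ∫ t in a..b, (P + Q * t + R * t ^ 2)
      = P * (b - a) + Q * (b ^ 2 - a ^ 2) / 2 + R * (b ^ 3 - a ^ 3) / 3 := by
  have hc : ∀ f : ℝ → ℝ, Continuous f → IntervalIntegrable f volume a b :=
    fun f hf => hf.intervalIntegrable a b
  rw [intervalIntegral.integral_add (hc _ (by fun_prop)) (hc _ (by fun_prop)),
    intervalIntegral.integral_add (hc _ (by fun_prop)) (hc _ (by fun_prop)),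
    intervalIntegral.integral_const_mul, intervalIntegral.integral_const_mul]
  simp only [intervalIntegral.integral_const, integral_id, integral_pow, smul_eq_mul]
  ring

theorem abs_mul_le_mul {a b A B : ℝ} (ha : |a| ≤ A) (hb : |b| ≤ B) : |a * b| ≤ A * B := by
  rw [abs_mul]
  exact mul_le_mul ha hb (abs_nonneg b) ((abs_nonneg a).trans ha)

theorem min_mul_abs_le_of_mul_eq {a b M F u N : ℝ} (hF : F ∈ Icc 0 M)
    (h : (a * M + (b - a) * F) * u = (b - a) * N) :
    min a b * M * |u| ≤ |b - a| * |N| := by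
  have hD : min a b * M ≤ a * M + (b - a) * F := by
    nlinarith [mul_nonneg (sub_nonneg.2 (min_le_left a b)) (sub_nonneg.2 hF.2),
      mul_nonneg (sub_nonneg.2 (min_le_right a b)) hF.1]
  calc min a b * M * |u| ≤ |a * M + (b - a) * F| * |u| :=
        mul_le_mul_of_nonneg_right (hD.trans (le_abs_self _)) (abs_nonneg u)
    _ = |b - a| * |N| := by rw [← abs_mul, h, abs_mul]

theorem integral_rq1_dx (c : Fin 4 → ℝ) (y a b : ℝ) :
    ∫ x in a..b, rq1 c x y = c 0 * (b - a) + c 1 * (b ^ 2 - a ^ 2) / 2 + c 2 * y * (b - a)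
      + c 3 * ((b ^ 3 - a ^ 3) / 3 - y ^ 2 * (b - a)) := by
  have h : (fun x => rq1 c x y)
      = fun x => (c 0 + c 2 * y - c 3 * y ^ 2) + c 1 * x + c 3 * x ^ 2 := by
    funext x; unfold rq1; ring
  rw [h, integral_quadratic]
  ring

theorem integral_rq1_dy (c : Fin 4 → ℝ) (x a b : ℝ) :
    ∫ y in a..b, rq1 c x y = (c 0 + c 1 * x + c 3 * x ^ 2) * (b - a)
      + c 2 * (b ^ 2 - a ^ 2) / 2 - c 3 * (b ^ 3 - a ^ 3) / 3 := by
  have h : (fun y => rq1 c x y)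
      = fun y => (c 0 + c 1 * x + c 3 * x ^ 2) + c 2 * y + (-c 3) * y ^ 2 := by
    funext y; unfold rq1; ring
  rw [h, integral_quadratic]
  ring

theorem fluxDefect_eq (βm βp d e : ℝ) (cm cp : Fin 4 → ℝ) :
    fluxDefect βm βp d e cm cp
      = βp * cp 1 - βm * cm 1 + (βp * cp 3 - βm * cm 3) * (d + e)
        + (d - e) * (βp * cp 2 - βm * cm 2 - (βp * cp 3 - βm * cm 3)) := by
  rw [fluxDefect, intervalIntegral.integral_congr (g := fun t =>
      (βp * (cp 1 + 2 * cp 3 * d) - βm * (cm 1 + 2 * cm 3 * d) + (βp * cp 2 - βm * cm 2) * (d - e))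
        + 4 * (βp * cp 3 - βm * cm 3) * (e - d) * t + 0 * t ^ 2) (fun t _ => by ring),
    integral_quadratic]
  ring

section JumpConditions

variable {βm βp d e : ℝ} {cm cp : Fin 4 → ℝ}

theorem coeff_eq_of_J1_J2 (h1 : J1 d e cm cp) (h2 : J2 cm cp) :
    cm 0 = cp 0 - d * (cm 1 - cp 1) ∧ cm 2 = cp 2 - (e - d) * (cm 1 - cp 1) ∧ cm 3 = cp 3 := by
  obtain ⟨hD, hE⟩ := h1
  simp only [rq1, J2] at hD hE h2
  exact ⟨by linear_combination hD - d ^ 2 * h2,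
    by linear_combination hE - hD + (1 - e ^ 2 + d ^ 2) * h2, h2⟩

theorem rq1_eq_of_J1_J2 (h1 : J1 d e cm cp) (h2 : J2 cm cp) (x y : ℝ) :
    rq1 cm x y = rq1 cp x y + (cm 1 - cp 1) * (x - d - (e - d) * y) := by
  obtain ⟨h0, h2, h3⟩ := coeff_eq_of_J1_J2 h1 h2
  simp only [rq1, h0, h2, h3]
  ring

theorem phiFn_eq_of_J1_J2 (h1 : J1 d e cm cp) (h2 : J2 cm cp) (x y : ℝ) :
    phiFn d e cm cp x y = rq1 cp x y + (cm 1 - cp 1) * min 0 (x - d - (e - d) * y) := by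
  unfold phiFn
  split_ifs with h
  · rw [rq1_eq_of_J1_J2 h1 h2, min_eq_right (by linarith)]
  · rw [min_eq_left (by linarith), mul_zero, add_zero]

theorem flux_eq_of_jump (h1 : J1 d e cm cp) (h2 : J2 cm cp) (h3 : J3 βm βp d e cm cp) :
    βm * (1 + (e - d) ^ 2) * (cm 1 - cp 1)
      = (βp - βm) * (cp 1 - (e - d) * cp 2 + 2 * e * cp 3) := by
  obtain ⟨h0, h2, h3'⟩ := coeff_eq_of_J1_J2 h1 h2
  rw [J3, fluxDefect_eq, h2, h3'] at h3
  linear_combination -h3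

end JumpConditions

/-- Edge means (`κ = 1/3`) or midpoint values (`κ = 1/4`) on the bottom, right, top and left
edges of the rotated-Q1 polynomial with coefficients `c`; `κ` is the value of the functional
on `t ↦ t²` along an edge. -/
def rq1Dof (κ : ℝ) (c : Fin 4 → ℝ) : Fin 4 → ℝ :=
  ![c 0 + c 1 / 2 + κ * c 3, c 0 + c 1 + c 2 / 2 + (1 - κ) * c 3,
    c 0 + c 1 / 2 + c 2 - (1 - κ) * c 3, c 0 + c 2 / 2 - κ * c 3]

section DegreesOfFreedom

variable {d e : ℝ} {cm cp : Fin 4 → ℝ}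

theorem dofI_eq_of_J1_J2 (h1 : J1 d e cm cp) (h2 : J2 cm cp) :
    dofI d e cm cp
      = rq1Dof (1 / 3) cp + (cm 1 - cp 1) • ![-d ^ 2 / 2, 0, -e ^ 2 / 2, -(d + e) / 2] := by
  obtain ⟨h0, h2, h3⟩ := coeff_eq_of_J1_J2 h1 h2
  ext k
  fin_cases k <;>
    simp only [Fin.zero_eta, Fin.mk_one, Fin.reduceFinMk, dofI, rq1Dof, Pi.add_apply,
      Pi.smul_apply, smul_eq_mul, Matrix.cons_val, integral_rq1_dx, integral_rq1_dy, h0, h2, h3] <;>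
    ring

theorem dofP_eq_of_J1_J2 (hd : d ∈ Icc 0 1) (he : e ∈ Icc 0 1) (h1 : J1 d e cm cp)
    (h2 : J2 cm cp) :
    dofP d e cm cp
      = rq1Dof (1 / 4) cp
        + (cm 1 - cp 1) • ![min 0 (1 / 2 - d), 0, min 0 (1 / 2 - e), -(d + e) / 2] := by
  obtain ⟨hd0, hd1⟩ := hd
  obtain ⟨he0, he1⟩ := he
  have hR : min 0 (1 - d - (e - d) * (1 / 2)) = 0 := min_eq_left (by linarith)
  have hL : min 0 (0 - d - (e - d) * (1 / 2)) = -(d + e) / 2 := by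
    rw [min_eq_right (by linarith)]; ring
  ext k
  fin_cases k <;>
    simp only [Fin.zero_eta, Fin.mk_one, Fin.reduceFinMk, dofP, rq1Dof, Pi.add_apply,
      Pi.smul_apply, smul_eq_mul, Matrix.cons_val, phiFn_eq_of_J1_J2 h1 h2, rq1, mul_zero,
      mul_one, sub_zero, sub_sub_sub_cancel_right, hR, hL] <;>
    ring

end DegreesOfFreedom

/-- Once `c` is eliminated by means of `g = rq1Dof κ c + u • ![sB, 0, sT, sL]`, the quantity
`(2 - 4κ) (c 1 - (e - d) c 2 + 2 e c 3)` (the mean of `∇p⁺ · (1, d - e)` along `DE`, scaled)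
becomes a combination of the `g k` minus `u` times this weight. -/
def fluxWeight (κ d e sB sT sL : ℝ) : ℝ :=
  (d + e - 1) * (sL - sB - sT) - (2 - 4 * κ) * (sL + (e - d) * (sT - sB))

section FluxWeight

variable {d e : ℝ}

/-- Writing `a = d(1 - d)` and `b = e(1 - e)`, both in `[0, 1/4]`, the weight is
`(2/3) ((1 + (e - d)²) (d + e)/2 + (3/4)(1 - d - e)(a + b))`. -/
theorem fluxWeight_dofI_mem (hd : d ∈ Icc 0 1) (he : e ∈ Icc 0 1) :
    fluxWeight (1 / 3) d e (-d ^ 2 / 2) (-e ^ 2 / 2) (-(d + e) / 2)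
      ∈ Icc 0 ((2 - 4 * (1 / 3)) * (1 + (e - d) ^ 2)) := by
  obtain ⟨hd0, hd1⟩ := hd
  obtain ⟨he0, he1⟩ := he
  have ha : 0 ≤ d * (1 - d) := mul_nonneg hd0 (by linarith)
  have hb : 0 ≤ e * (1 - e) := mul_nonneg he0 (by linarith)
  unfold fluxWeight
  rcases le_total (d + e) 1 with h | h
  · have h' : 0 ≤ 1 - d - e := by linarith
    constructor
    · nlinarith [mul_nonneg h' ha, mul_nonneg h' hb, sq_nonneg (e - d), mul_nonneg hd0 he0,
        mul_nonneg (mul_nonneg hd0 he0) (sq_nonneg (e - d))]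
    · nlinarith [sq_nonneg (2 * d - 1), sq_nonneg (2 * e - 1), sq_nonneg (e - d),
        mul_nonneg h' (sq_nonneg (e - d)),
        mul_nonneg (by linarith : (0:ℝ) ≤ 2 - d - e) (sq_nonneg (e - d)),
        mul_nonneg h' (sq_nonneg (2 * d - 1)), mul_nonneg h' (sq_nonneg (2 * e - 1))]
  · have h' : 0 ≤ d + e - 1 := by linarith
    constructor
    · nlinarith [sq_nonneg (2 * d - 1), sq_nonneg (2 * e - 1), sq_nonneg (e - d),
        mul_nonneg h' (sq_nonneg (e - d)), mul_nonneg h' (sq_nonneg (2 * d - 1)),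
        mul_nonneg h' (sq_nonneg (2 * e - 1))]
    · nlinarith [mul_nonneg h' ha, mul_nonneg h' hb, sq_nonneg (e - d),
        mul_nonneg (by linarith : (0:ℝ) ≤ 2 - d - e) (sq_nonneg (e - d))]

theorem fluxWeight_dofP_mem (hd : d ∈ Icc 0 1) (he : e ∈ Icc 0 1) :
    fluxWeight (1 / 4) d e (min 0 (1 / 2 - d)) (min 0 (1 / 2 - e)) (-(d + e) / 2)
      ∈ Icc 0 ((2 - 4 * (1 / 4)) * (1 + (e - d) ^ 2)) := by
  obtain ⟨hd0, hd1⟩ := hd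
  obtain ⟨he0, he1⟩ := he
  unfold fluxWeight
  rcases le_total d (1 / 2) with hd2 | hd2 <;> rcases le_total e (1 / 2) with he2 | he2 <;>
    simp only [min_eq_left, min_eq_right, hd2, he2, sub_nonneg, sub_nonpos] <;>
    constructor <;>
    nlinarith [sq_nonneg (d + e - 1), sq_nonneg (e - d), sq_nonneg (2 * d - 1),
      sq_nonneg (2 * e - 1), mul_nonneg hd0 he0, sq_nonneg (d + e)]

end FluxWeight

def jumpBound (βm βp : ℝ) : ℝ := 18 * |βp - βm| / min βm βp

def coeffBound (βm βp : ℝ) : ℝ := 20 + 15 * jumpBound βm βp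

section DofSystem

variable {κ sB sT sL u : ℝ} {c g : Fin 4 → ℝ}

theorem rows_of_eq_rq1Dof (hdof : g = rq1Dof κ c + u • ![sB, 0, sT, sL]) :
    g 0 = c 0 + c 1 / 2 + κ * c 3 + u * sB ∧ g 1 = c 0 + c 1 + c 2 / 2 + (1 - κ) * c 3 ∧
      g 2 = c 0 + c 1 / 2 + c 2 - (1 - κ) * c 3 + u * sT ∧
      g 3 = c 0 + c 2 / 2 - κ * c 3 + u * sL := by
  subst hdof
  simp [rq1Dof]

theorem abs_jump_le_of_eq_rq1Dof {βm βp d e : ℝ} (hβm : 0 < βm) (hβp : 0 < βp)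
    (hd : d ∈ Icc 0 1) (he : e ∈ Icc 0 1) (hκ : κ ∈ Icc 0 (1 / 3))
    (hW : fluxWeight κ d e sB sT sL ∈ Icc 0 ((2 - 4 * κ) * (1 + (e - d) ^ 2)))
    (hflux : βm * (1 + (e - d) ^ 2) * u = (βp - βm) * (c 1 - (e - d) * c 2 + 2 * e * c 3))
    (hg : ∀ k, |g k| ≤ 1) (hdof : g = rq1Dof κ c + u • ![sB, 0, sT, sL]) :
    |u| ≤ jumpBound βm βp := by
  obtain ⟨r0, r1, r2, r3⟩ := rows_of_eq_rq1Dof hdof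
  obtain ⟨hd0, hd1⟩ := hd
  obtain ⟨he0, he1⟩ := he
  obtain ⟨hκ0, hκ1⟩ := hκ
  set G := (2 - 4 * κ) * (g 1 - g 3 - (e - d) * (g 2 - g 0))
    + (d + e - 1) * (g 1 + g 3 - g 0 - g 2)
  have key : (βm * ((2 - 4 * κ) * (1 + (e - d) ^ 2)) + (βp - βm) * fluxWeight κ d e sB sT sL) * u
      = (βp - βm) * G := by
    unfold fluxWeight
    linear_combination (2 - 4 * κ) * hflux - (βp - βm) * ((2 - 4 * κ) * (r1 - r3)
      - (2 - 4 * κ) * (e - d) * (r2 - r0) + (d + e - 1) * (r1 + r3 - r0 - r2))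
  have hG : |G| ≤ 12 := by
    have hg' := fun k => abs_le.mp (hg k)
    have hX : |g 1 - g 3 - (e - d) * (g 2 - g 0)| ≤ 4 := by
      obtain ⟨h, h'⟩ := abs_le.mp (abs_mul_le_mul
        (abs_le.mpr ⟨by linarith, by linarith⟩ : |e - d| ≤ 1)
        (abs_le.mpr ⟨by linarith [hg' 0, hg' 2], by linarith [hg' 0, hg' 2]⟩ : |g 2 - g 0| ≤ 2))
      exact abs_le.mpr ⟨by linarith [hg' 1, hg' 3], by linarith [hg' 1, hg' 3]⟩
    have hY : |g 1 + g 3 - g 0 - g 2| ≤ 4 := abs_le.mpr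
      ⟨by linarith [hg' 0, hg' 1, hg' 2, hg' 3], by linarith [hg' 0, hg' 1, hg' 2, hg' 3]⟩
    obtain ⟨p, p'⟩ := abs_le.mp
      (abs_mul_le_mul (abs_le.mpr ⟨by linarith, by linarith⟩ : |2 - 4 * κ| ≤ 2) hX)
    obtain ⟨q, q'⟩ := abs_le.mp
      (abs_mul_le_mul (abs_le.mpr ⟨by linarith, by linarith⟩ : |d + e - 1| ≤ 1) hY)
    exact abs_le.mpr ⟨by linarith, by linarith⟩
  have hmin : 0 < min βm βp := lt_min hβm hβp
  have hM : 2 / 3 ≤ (2 - 4 * κ) * (1 + (e - d) ^ 2) := by nlinarith [sq_nonneg (e - d)]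
  have hmain := min_mul_abs_le_of_mul_eq hW key
  rw [jumpBound, le_div_iff₀ hmin]
  nlinarith [mul_le_mul_of_nonneg_left hG (abs_nonneg (βp - βm)),
    mul_nonneg (sub_nonneg.2 hM) (mul_nonneg hmin.le (abs_nonneg u))]

theorem abs_coeff_le_of_eq_rq1Dof (hκ : κ ∈ Icc 0 (1 / 3)) (hsB : |sB| ≤ 1) (hsT : |sT| ≤ 1)
    (hsL : |sL| ≤ 1) (hg : ∀ k, |g k| ≤ 1) (hdof : g = rq1Dof κ c + u • ![sB, 0, sT, sL])
    {U : ℝ} (hu : |u| ≤ U) :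
    ∀ i, |c i| ≤ 19 + 14 * U := by
  obtain ⟨r0, r1, r2, r3⟩ := rows_of_eq_rq1Dof hdof
  obtain ⟨hκ0, hκ1⟩ := hκ
  obtain ⟨g0, g0'⟩ := abs_le.mp (hg 0)
  obtain ⟨g1, g1'⟩ := abs_le.mp (hg 1)
  obtain ⟨g2, g2'⟩ := abs_le.mp (hg 2)
  obtain ⟨g3, g3'⟩ := abs_le.mp (hg 3)
  obtain ⟨pB, pB'⟩ := abs_le.mp (abs_mul_le_mul hu hsB)
  obtain ⟨pT, pT'⟩ := abs_le.mp (abs_mul_le_mul hu hsT)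
  obtain ⟨pL, pL'⟩ := abs_le.mp (abs_mul_le_mul hu hsL)
  have hc3 : |c 3| ≤ 6 + 9 / 2 * U := by
    have h : |(2 - 4 * κ) * c 3| ≤ 4 + 3 * U := by
      rw [show (2 - 4 * κ) * c 3 = g 1 + g 3 - g 0 - g 2 - (u * sL - u * sB - u * sT) by
        linear_combination r0 + r2 - r1 - r3]
      exact abs_le.mpr ⟨by linarith, by linarith⟩
    rw [abs_mul, abs_of_pos (by linarith : (0:ℝ) < 2 - 4 * κ)] at h
    nlinarith [abs_nonneg (c 3)]
  obtain ⟨q, q'⟩ := abs_le.mp hc3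
  obtain ⟨q1, q1'⟩ := abs_le.mp
    (abs_mul_le_mul (abs_le.mpr ⟨by linarith, by linarith⟩ : |1 - κ| ≤ 1) hc3)
  have hc1 : c 1 = g 1 - g 3 - c 3 + u * sL := by linear_combination r3 - r1
  have hc2 : c 2 = g 2 - g 0 + c 3 - (u * sT - u * sB) := by linear_combination r0 - r2
  have hc0 : c 0 = g 1 - c 1 - c 2 / 2 - (1 - κ) * c 3 := by linear_combination -r1
  have hU : 0 ≤ U := (abs_nonneg u).trans hu
  have b1 : -(8 + 11 / 2 * U) ≤ c 1 ∧ c 1 ≤ 8 + 11 / 2 * U := by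
    rw [hc1]; constructor <;> linarith
  have b2 : -(8 + 13 / 2 * U) ≤ c 2 ∧ c 2 ≤ 8 + 13 / 2 * U := by
    rw [hc2]; constructor <;> linarith
  have b0 : -(19 + 14 * U) ≤ c 0 ∧ c 0 ≤ 19 + 14 * U := by
    rw [hc0]; constructor <;> linarith
  intro i
  fin_cases i <;> simp only [Fin.zero_eta, Fin.mk_one, Fin.reduceFinMk] <;>
    exact abs_le.mpr ⟨by linarith, by linarith⟩

end DofSystem

section CoefficientBounds

variable {βm βp d e : ℝ} {cm cp : Fin 4 → ℝ}

theorem abs_coeff_le_of_jump {κ sB sT sL : ℝ} {g : Fin 4 → ℝ} (hβm : 0 < βm) (hβp : 0 < βp)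
    (hd : d ∈ Icc 0 1) (he : e ∈ Icc 0 1) (hκ : κ ∈ Icc 0 (1 / 3))
    (hsB : |sB| ≤ 1) (hsT : |sT| ≤ 1) (hsL : |sL| ≤ 1)
    (hW : fluxWeight κ d e sB sT sL ∈ Icc 0 ((2 - 4 * κ) * (1 + (e - d) ^ 2)))
    (h1 : J1 d e cm cp) (h2 : J2 cm cp) (h3 : J3 βm βp d e cm cp)
    (hg : ∀ k, |g k| ≤ 1) (hdof : g = rq1Dof κ cp + (cm 1 - cp 1) • ![sB, 0, sT, sL]) :
    ∀ i, |cm i| ≤ coeffBound βm βp ∧ |cp i| ≤ coeffBound βm βp := by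
  have hu := abs_jump_le_of_eq_rq1Dof hβm hβp hd he hκ hW (flux_eq_of_jump h1 h2 h3) hg hdof
  have hp := fun k => abs_le.mp (abs_coeff_le_of_eq_rq1Dof hκ hsB hsT hsL hg hdof hu k)
  obtain ⟨hm0, hm2, hm3⟩ := coeff_eq_of_J1_J2 h1 h2
  obtain ⟨hu1, hu2⟩ := abs_le.mp hu
  obtain ⟨pd, pd'⟩ := abs_le.mp (abs_mul_le_mul
    (abs_le.mpr ⟨by linarith [hd.1], hd.2⟩ : |d| ≤ 1) hu)
  obtain ⟨pe, pe'⟩ := abs_le.mp (abs_mul_le_mul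
    (abs_le.mpr ⟨by linarith [hd.2, he.1], by linarith [hd.1, he.2]⟩ : |e - d| ≤ 1) hu)
  obtain ⟨c0, c0'⟩ := hp 0
  obtain ⟨c1, c1'⟩ := hp 1
  obtain ⟨c2, c2'⟩ := hp 2
  obtain ⟨c3, c3'⟩ := hp 3
  rw [coeffBound]
  intro i
  fin_cases i <;> simp only [Fin.zero_eta, Fin.mk_one, Fin.reduceFinMk] <;>
    exact ⟨abs_le.mpr ⟨by linarith, by linarith⟩, abs_le.mpr ⟨by linarith, by linarith⟩⟩

theorem abs_coeff_le_of_dofI (hβm : 0 < βm) (hβp : 0 < βp) (hd : d ∈ Icc 0 1)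
    (he : e ∈ Icc 0 1) (h1 : J1 d e cm cp) (h2 : J2 cm cp) (h3 : J3 βm βp d e cm cp)
    (hg : ∀ k, |dofI d e cm cp k| ≤ 1) :
    ∀ i, |cm i| ≤ coeffBound βm βp ∧ |cp i| ≤ coeffBound βm βp := by
  have hsq : ∀ t ∈ Icc (0:ℝ) 1, |-t ^ 2 / 2| ≤ 1 := fun t ht =>
    abs_le.mpr ⟨by nlinarith [ht.1, ht.2], by nlinarith [sq_nonneg t]⟩
  exact abs_coeff_le_of_jump hβm hβp hd he (by norm_num) (hsq d hd) (hsq e he)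
    (abs_le.mpr ⟨by linarith [hd.2, he.2], by linarith [hd.1, he.1]⟩)
    (fluxWeight_dofI_mem hd he) h1 h2 h3 hg (dofI_eq_of_J1_J2 h1 h2)

theorem abs_coeff_le_of_dofP (hβm : 0 < βm) (hβp : 0 < βp) (hd : d ∈ Icc 0 1)
    (he : e ∈ Icc 0 1) (h1 : J1 d e cm cp) (h2 : J2 cm cp) (h3 : J3 βm βp d e cm cp)
    (hg : ∀ k, |dofP d e cm cp k| ≤ 1) :
    ∀ i, |cm i| ≤ coeffBound βm βp ∧ |cp i| ≤ coeffBound βm βp := by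
  have hmin : ∀ t ∈ Icc (0:ℝ) 1, |min 0 (1 / 2 - t)| ≤ 1 := fun t ht =>
    abs_le.mpr ⟨le_min (by norm_num) (by linarith [ht.2]), (min_le_left _ _).trans zero_le_one⟩
  exact abs_coeff_le_of_jump hβm hβp hd he (by norm_num) (hmin d hd) (hmin e he)
    (abs_le.mpr ⟨by linarith [hd.2, he.2], by linarith [hd.1, he.1]⟩)
    (fluxWeight_dofP_mem hd he) h1 h2 h3 hg (dofP_eq_of_J1_J2 hd he h1 h2)

end CoefficientBounds

theorem abs_rq1D_le {c : Fin 4 → ℝ} {K : ℝ} (hc : ∀ i, |c i| ≤ K) {a b : ℕ} (hab : a + b ≤ 2)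
    {x y : ℝ} (hx : x ∈ Icc 0 1) (hy : y ∈ Icc 0 1) : |rq1D c a b x y| ≤ 4 * K := by
  obtain ⟨hx0, hx1⟩ := hx
  obtain ⟨hy0, hy1⟩ := hy
  have hK : 0 ≤ K := (abs_nonneg _).trans (hc 0)
  have hx' : |x| ≤ 1 := abs_le.mpr ⟨by linarith, hx1⟩
  have hy' : |y| ≤ 1 := abs_le.mpr ⟨by linarith, hy1⟩
  have hxy : |x ^ 2 - y ^ 2| ≤ 1 := abs_le.mpr ⟨by nlinarith, by nlinarith⟩
  obtain ⟨h0, h0'⟩ := abs_le.mp (hc 0)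
  obtain ⟨h1, h1'⟩ := abs_le.mp (hc 1)
  obtain ⟨h2, h2'⟩ := abs_le.mp (hc 2)
  obtain ⟨h3, h3'⟩ := abs_le.mp (hc 3)
  obtain ⟨p1, p1'⟩ := abs_le.mp (abs_mul_le_mul (hc 1) hx')
  obtain ⟨p2, p2'⟩ := abs_le.mp (abs_mul_le_mul (hc 2) hy')
  obtain ⟨p3, p3'⟩ := abs_le.mp (abs_mul_le_mul (hc 3) hxy)
  obtain ⟨p4, p4'⟩ := abs_le.mp (abs_mul_le_mul (hc 3) hx')
  obtain ⟨p5, p5'⟩ := abs_le.mp (abs_mul_le_mul (hc 3) hy')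
  have ha : a ≤ 2 := by omega
  have hb : b ≤ 2 := by omega
  interval_cases a <;> interval_cases b <;> (try omega) <;> simp only [rq1D, rq1, abs_le] <;>
    constructor <;> linarith

/-- Boundedness of the rotated-Q1 IFE basis functions, uniformly in the
interface location (reference element, `h = 1`): all partial derivatives of order `≤ 2`
of both polynomial pieces of each basis function (for either type of degrees of freedom)
are bounded on `T` by a constant depending only on `β⁻, β⁺`. -/
theorem ife_basis_boundedness
    (βm βp : ℝ) (hβm : 0 < βm) (hβp : 0 < βp) :
    ∃ C > 0, ∀ d ∈ Ioo (0:ℝ) 1, ∀ e ∈ Ioo (0:ℝ) 1, ∀ j : Fin 4,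
      ∀ cm cp : Fin 4 → ℝ,
        J1 d e cm cp → J2 cm cp → J3 βm βp d e cm cp →
        (dofI d e cm cp = (fun k => if k = j then 1 else 0) ∨
          dofP d e cm cp = (fun k => if k = j then 1 else 0)) →
        ∀ a b : ℕ, a + b ≤ 2 → ∀ x ∈ Icc (0:ℝ) 1, ∀ y ∈ Icc (0:ℝ) 1,
          |rq1D cm a b x y| ≤ C ∧ |rq1D cp a b x y| ≤ C := by
  refine ⟨4 * coeffBound βm βp, by unfold coeffBound jumpBound; positivity, ?_⟩
  rintro d hd e he j cm cp h1 h2 h3 hdof a b hab x hx y hy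
  have hunit : ∀ k : Fin 4, |(if k = j then (1 : ℝ) else 0)| ≤ 1 := fun k => by
    split_ifs <;> norm_num
  have hd' := Ioo_subset_Icc_self hd
  have he' := Ioo_subset_Icc_self he
  have hc : ∀ i, |cm i| ≤ coeffBound βm βp ∧ |cp i| ≤ coeffBound βm βp := by
    rcases hdof with hI | hP
    · exact abs_coeff_le_of_dofI hβm hβp hd' he' h1 h2 h3 (by rw [hI]; exact hunit)
    · exact abs_coeff_le_of_dofP hβm hβp hd' he' h1 h2 h3 (by rw [hP]; exact hunit)
  exact ⟨abs_rq1D_le (fun i => (hc i).1) hab hx hy, abs_rq1D_le (fun i => (hc i).2) hab hx hy⟩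

end
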